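/- For every real number t > 0, define V₁₁(t) = 9t(2 + 9t⁻³) if t⁻³ ≤ 2/27 and V₁₁(t) = 24t if t⁻³ ≥ 2/27. Then V₁₁(t) ∈ E(t), and every element e of E(t) with e ∉ {γ₁(t), γ₂(t), γ₃(t), γ₄(t), γ₅(t), γ₆(t), γ₇(t), γ₈(t), 8t, t(14 + t⁻³)} satisfies e ≥ V₁₁(t). -/

import Mathlib

/-!
Each of the three families `γ_n`, `α_k`, `β_l` is increasing in its index. Removing the listed
values (note `α₁ = γ₁`, `α₃ = t(14 + t⁻³)`, `β₂ = 8t`) leaves `γ₉`, `α₅` and `β₄ = 24t` as the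
smallest remaining member of each family, and `α₅ = t(34 + t⁻³)` exceeds `β₄`. Hence the minimum
is `min γ₉ β₄`, and `γ₉ = 18t + 81t⁻²` lies below `24t` exactly when `t⁻³ ≤ 2/27`.
-/

/-- `γ_n(t) = t·n·(2 + n·t⁻³)` -/
noncomputable def gammaF (t : ℝ) (n : ℕ) : ℝ := t * n * (2 + n * (t ^ 3)⁻¹)

/-- `α_k(t) = t·(k(k+2) − 1 + t⁻³)` -/
noncomputable def alphaF (t : ℝ) (k : ℕ) : ℝ := t * (k * (k + 2) - 1 + (t ^ 3)⁻¹)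

/-- `β_l(t) = t·l·(l+2)` -/
noncomputable def betaF (t : ℝ) (l : ℕ) : ℝ := t * l * (l + 2)

/-- The set `E(t)` of nonzero eigenvalues of the unit-volume Berger sphere Laplacian. -/
def EV (t : ℝ) : Set ℝ :=
  {x | ∃ n : ℕ, 1 ≤ n ∧ x = gammaF t n} ∪
  {x | ∃ k : ℕ, Odd k ∧ 1 ≤ k ∧ x = alphaF t k} ∪
  {x | ∃ l : ℕ, Even l ∧ 2 ≤ l ∧ x = betaF t l}

theorem gammaF_le_gammaF {t : ℝ} (ht : 0 ≤ t) {m n : ℕ} (hmn : m ≤ n) :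
    gammaF t m ≤ gammaF t n := by
  unfold gammaF
  gcongr

theorem alphaF_le_alphaF {t : ℝ} (ht : 0 ≤ t) {m n : ℕ} (hmn : m ≤ n) :
    alphaF t m ≤ alphaF t n := by
  unfold alphaF
  gcongr

theorem betaF_le_betaF {t : ℝ} (ht : 0 ≤ t) {m n : ℕ} (hmn : m ≤ n) :
    betaF t m ≤ betaF t n := by
  unfold betaF
  gcongr

theorem alphaF_one (t : ℝ) : alphaF t 1 = gammaF t 1 := by
  unfold alphaF gammaF
  push_cast
  ring

theorem alphaF_three (t : ℝ) : alphaF t 3 = t * (14 + (t ^ 3)⁻¹) := by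
  unfold alphaF
  push_cast
  ring

theorem betaF_two (t : ℝ) : betaF t 2 = 8 * t := by
  unfold betaF
  push_cast
  ring

theorem betaF_four (t : ℝ) : betaF t 4 = 24 * t := by
  unfold betaF
  push_cast
  ring

theorem betaF_four_le_alphaF_five {t : ℝ} (ht : 0 ≤ t) : betaF t 4 ≤ alphaF t 5 := by
  have : 0 ≤ t * (t ^ 3)⁻¹ := by positivity
  unfold alphaF betaF
  norm_num
  linarith

theorem betaF_four_sub_gammaF_nine (t : ℝ) :
    betaF t 4 - gammaF t 9 = 81 * t * (2 / 27 - (t ^ 3)⁻¹) := by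
  unfold gammaF betaF
  norm_num
  ring

/-- The paper's `V₁₁(t)`. -/
noncomputable def V11 (t : ℝ) : ℝ := min (gammaF t 9) (betaF t 4)

theorem V11_eq_gammaF_nine {t : ℝ} (ht : 0 ≤ t) (h : (t ^ 3)⁻¹ ≤ 2 / 27) :
    V11 t = gammaF t 9 := by
  refine min_eq_left (sub_nonneg.1 ?_)
  rw [betaF_four_sub_gammaF_nine]
  exact mul_nonneg (by positivity) (sub_nonneg.2 h)

theorem V11_eq_betaF_four {t : ℝ} (ht : 0 ≤ t) (h : 2 / 27 ≤ (t ^ 3)⁻¹) :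
    V11 t = betaF t 4 := by
  refine min_eq_right (sub_nonpos.1 ?_)
  rw [betaF_four_sub_gammaF_nine]
  exact mul_nonpos_of_nonneg_of_nonpos (by positivity) (sub_nonpos.2 h)

theorem V11_mem_EV (t : ℝ) : V11 t ∈ EV t := by
  rcases min_choice (gammaF t 9) (betaF t 4) with h | h
  · exact .inl (.inl ⟨9, by norm_num, h⟩)
  · exact .inr ⟨4, by decide, by norm_num, h⟩

theorem Nat.five_le_of_odd {k : ℕ} (hk : Odd k) (h1 : k ≠ 1) (h3 : k ≠ 3) : 5 ≤ k := by
  obtain ⟨j, rfl⟩ := hk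
  omega

theorem Nat.four_le_of_even {l : ℕ} (hl : Even l) (h2 : 2 ≤ l) (hne : l ≠ 2) : 4 ≤ l := by
  obtain ⟨j, rfl⟩ := hl
  omega

theorem berger_lambda11 (t : ℝ) (ht : 0 < t) :
    ∃ V : ℝ,
      ((t ^ 3)⁻¹ ≤ 2 / 27 → V = 9 * t * (2 + 9 * (t ^ 3)⁻¹)) ∧
      (2 / 27 ≤ (t ^ 3)⁻¹ → V = 24 * t) ∧
      V ∈ EV t ∧
      ∀ e ∈ EV t, e ∉ ({gammaF t 1, gammaF t 2, gammaF t 3, gammaF t 4, gammaF t 5, gammaF t 6, gammaF t 7, gammaF t 8, 8 * t, t * (14 + (t ^ 3)⁻¹)} : Set ℝ) → V ≤ e := by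
  refine ⟨V11 t, fun h => ?_, fun h => ?_, V11_mem_EV t, ?_⟩
  · rw [V11_eq_gammaF_nine ht.le h, gammaF]
    push_cast
    ring
  · rw [V11_eq_betaF_four ht.le h, betaF_four]
  rintro e ((⟨n, hn, rfl⟩ | ⟨k, hk, -, rfl⟩) | ⟨l, hl, hl2, rfl⟩) he
  · rcases le_or_gt 9 n with h9 | h8
    · exact (min_le_left _ _).trans (gammaF_le_gammaF ht.le h9)
    · exact absurd (by interval_cases n <;> simp) he
  · have h1 : k ≠ 1 := by rintro rfl; simp [alphaF_one] at he
    have h3 : k ≠ 3 := by rintro rfl; simp [alphaF_three] at he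
    exact (min_le_right _ _).trans ((betaF_four_le_alphaF_five ht.le).trans
      (alphaF_le_alphaF ht.le (Nat.five_le_of_odd hk h1 h3)))
  · have h2 : l ≠ 2 := by rintro rfl; simp [betaF_two] at he
    exact (min_le_right _ _).trans (betaF_le_betaF ht.le (Nat.four_le_of_even hl hl2 h2))
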